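/- Let ρ̃ : ℝ×ℝ³ → ℝ, u : ℝ×ℝ³ → ℝ³ and F : ℝ×ℝ³ → Matrix (Fin 3) (Fin 3) ℝ be twice continuously differentiable with det F ≠ 0 everywhere, let P : ℝ → ℝ be twice continuously differentiable, and suppose that at every point ∂ₜρ̃ + ∇·(ρ̃u) = 0 and ∂ₜF + (u·∇)F = (∇u)F. Define M = FFᵀ/(det F), ρ = ρ̃ − 1, G = M − I − (P(ρ̃) − P(1))I, q = P′(ρ+1)(ρ+1) − P′(1), g = −(∇u)(M − I) − (M − I)(∇u)ᵀ + (∇·u)(M − I), and the effective flux 𝒢 = ∇·G (the row divergence of G). Then at every point ∂ₜ𝒢 + ∇·((u·∇)G) − ∇(q ∇·u) + ∇·g = Δu + P′(1)∇(∇·u). -/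

import Mathlib

/-!
Write `D = ∂ₜ + u·∇` for the material derivative; at a point it is the directional derivative
along `(1, u)`. The transport equation `DF = (∇u)F` gives `D(det F) = (∇·u) det F`, hence
`DM = (∇u)M + M(∇u)ᵀ − (∇·u)M`, and the continuity equation gives `Dρ̃ = −ρ̃ ∇·u`. Together
these yield `DG = −g + ∇u + (∇u)ᵀ + (q + P′(1) − 1)(∇·u) I`. Since `∂ₜ` and `∂ⱼ` commute on `C²`
fields, `∂ₜ𝒢 + ∇·((u·∇)G)` is the row divergence of `DG`, and the row divergence of the right-hand
side, using `∇·(∇u)ᵀ = ∇(∇·u)`, is the claim.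
-/

open scoped BigOperators
open Matrix

/-- Time partial derivative of a scalar field on ℝ × ℝ³. -/
noncomputable def dt (f : ℝ × (Fin 3 → ℝ) → ℝ) (p : ℝ × (Fin 3 → ℝ)) : ℝ :=
  fderiv ℝ f p (1, 0)

/-- Spatial partial derivative in direction `i` of a scalar field on ℝ × ℝ³. -/
noncomputable def dx (i : Fin 3) (f : ℝ × (Fin 3 → ℝ) → ℝ) (p : ℝ × (Fin 3 → ℝ)) : ℝ :=
  fderiv ℝ f p (0, Pi.single i 1)

/-- The matrix field `M = FFᵀ/(det F)`. -/
noncomputable def Mfield (F : ℝ × (Fin 3 → ℝ) → Matrix (Fin 3) (Fin 3) ℝ)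
    (p : ℝ × (Fin 3 → ℝ)) : Matrix (Fin 3) (Fin 3) ℝ :=
  ((F p).det)⁻¹ • (F p * (F p)ᵀ)

/-- The effective tensor `G = M − I − (P(ρ̃) − P(1))I`. -/
noncomputable def Gfield (P : ℝ → ℝ) (ρt : ℝ × (Fin 3 → ℝ) → ℝ)
    (F : ℝ × (Fin 3 → ℝ) → Matrix (Fin 3) (Fin 3) ℝ)
    (p : ℝ × (Fin 3 → ℝ)) : Matrix (Fin 3) (Fin 3) ℝ :=
  Mfield F p - 1 - (P (ρt p) - P 1) • (1 : Matrix (Fin 3) (Fin 3) ℝ)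

/-- Divergence `∇·u` of the velocity field. -/
noncomputable def divU (u : ℝ × (Fin 3 → ℝ) → Fin 3 → ℝ) (p : ℝ × (Fin 3 → ℝ)) : ℝ :=
  ∑ i, dx i (fun q => u q i) p

/-- The scalar `q = P′(ρ+1)(ρ+1) − P′(1)` with `ρ = ρ̃ − 1`. -/
noncomputable def qfun (P : ℝ → ℝ) (ρt : ℝ × (Fin 3 → ℝ) → ℝ)
    (p : ℝ × (Fin 3 → ℝ)) : ℝ :=
  deriv P ((ρt p - 1) + 1) * ((ρt p - 1) + 1) - deriv P 1

/-- The matrix `g = −(∇u)(M − I) − (M − I)(∇u)ᵀ + (∇·u)(M − I)`. -/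
noncomputable def gfun (u : ℝ × (Fin 3 → ℝ) → Fin 3 → ℝ)
    (F : ℝ × (Fin 3 → ℝ) → Matrix (Fin 3) (Fin 3) ℝ)
    (p : ℝ × (Fin 3 → ℝ)) : Matrix (Fin 3) (Fin 3) ℝ :=
  Matrix.of fun i j =>
    -(∑ k, dx k (fun q => u q i) p * (Mfield F p - 1) k j)
    - (∑ k, (Mfield F p - 1) i k * dx k (fun q => u q j) p)
    + divU u p * (Mfield F p - 1) i j

section DirectionalDerivative

variable {E : Type*} [NormedAddCommGroup E] [NormedSpace ℝ E] {f : E → ℝ} {p v w : E}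

theorem ContDiff.fderiv_apply_const {n : ℕ} (hf : ContDiff ℝ (n + 1) f) :
    ContDiff ℝ n fun q => fderiv ℝ f q v :=
  (hf.fderiv_right le_rfl).clm_apply contDiff_const

theorem fderiv_fderiv_apply_comm (hf : ContDiff ℝ 2 f) :
    fderiv ℝ (fun q => fderiv ℝ f q w) p v = fderiv ℝ (fun q => fderiv ℝ f q v) p w := by
  have hdf : DifferentiableAt ℝ (fderiv ℝ f) p :=
    ((hf.fderiv_right (m := 1) le_rfl).differentiable one_ne_zero) p
  rw [fderiv_clm_apply hdf (differentiableAt_const w),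
    fderiv_clm_apply hdf (differentiableAt_const v)]
  simpa using hf.contDiffAt.isSymmSndFDerivAt (by simp) v w

theorem fderiv_comp_apply_eq_deriv_mul {P : ℝ → ℝ} (hP : DifferentiableAt ℝ P (f p))
    (hf : DifferentiableAt ℝ f p) :
    fderiv ℝ (fun q => P (f q)) p v = deriv P (f p) * fderiv ℝ f p v := by
  have h : HasFDerivAt (fun q => P (f q)) (deriv P (f p) • fderiv ℝ f p) p :=
    hP.hasDerivAt.comp_hasFDerivAt p hf.hasFDerivAt
  rw [h.fderiv, _root_.smul_apply, smul_eq_mul]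

theorem fderiv_inv_apply (hf : DifferentiableAt ℝ f p) (hp : f p ≠ 0) :
    fderiv ℝ (fun q => (f q)⁻¹) p v = -fderiv ℝ f p v / f p ^ 2 := by
  rw [fderiv_comp_apply_eq_deriv_mul (differentiableAt_inv hp) hf, deriv_inv]
  ring

end DirectionalDerivative

section MatrixField

variable {E : Type*} [NormedAddCommGroup E] [NormedSpace ℝ E]
  {F : E → Matrix (Fin 3) (Fin 3) ℝ} {A : Matrix (Fin 3) (Fin 3) ℝ} {p v : E}

theorem differentiableAt_det (hF : ∀ i j, DifferentiableAt ℝ (fun q => F q i j) p) :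
    DifferentiableAt ℝ (fun q => (F q).det) p := by
  simp only [Matrix.det_fin_three]
  fun_prop

theorem contDiff_det {n : WithTop ℕ∞} (hF : ∀ i j, ContDiff ℝ n fun q => F q i j) :
    ContDiff ℝ n fun q => (F q).det := by
  simp only [Matrix.det_fin_three]
  fun_prop

theorem fderiv_det_apply_eq_trace_mul (hF : ∀ i j, DifferentiableAt ℝ (fun q => F q i j) p)
    (hA : ∀ i j, fderiv ℝ (fun q => F q i j) p v = (A * F p) i j) :
    fderiv ℝ (fun q => (F q).det) p v = A.trace * (F p).det := by
  simp only [Matrix.det_fin_three]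
  simp (disch := fun_prop) only [fderiv_fun_sub, fderiv_fun_add, fderiv_fun_mul,
    _root_.sub_apply, _root_.add_apply, _root_.smul_apply, smul_eq_mul, hA]
  simp only [Matrix.mul_apply, Matrix.trace_fin_three, Fin.sum_univ_three]
  ring

theorem fderiv_inv_det_smul_mul_transpose_apply
    (hF : ∀ i j, DifferentiableAt ℝ (fun q => F q i j) p)
    (hA : ∀ i j, fderiv ℝ (fun q => F q i j) p v = (A * F p) i j) (hdet : (F p).det ≠ 0)
    (i j : Fin 3) :
    fderiv ℝ (fun q => (((F q).det)⁻¹ • (F q * (F q)ᵀ)) i j) p v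
      = (A * (((F p).det)⁻¹ • (F p * (F p)ᵀ)) + (((F p).det)⁻¹ • (F p * (F p)ᵀ)) * Aᵀ
          - A.trace • (((F p).det)⁻¹ • (F p * (F p)ᵀ))) i j := by
  have hd := differentiableAt_det hF
  simp only [Matrix.smul_apply, Matrix.mul_apply, Matrix.transpose_apply, smul_eq_mul,
    Fin.sum_univ_three]
  simp (disch := fun_prop) only [fderiv_fun_mul, fderiv_fun_add, _root_.add_apply,
    _root_.smul_apply, smul_eq_mul, hA, fderiv_inv_apply hd hdet,
    fderiv_det_apply_eq_trace_mul hF hA]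
  simp only [Matrix.sub_apply, Matrix.add_apply, Matrix.smul_apply, Matrix.mul_apply,
    Matrix.transpose_apply, Matrix.trace_fin_three, Fin.sum_univ_three, smul_eq_mul]
  field_simp
  ring

end MatrixField

section SpaceTime

variable {f g : ℝ × (Fin 3 → ℝ) → ℝ} {u : ℝ × (Fin 3 → ℝ) → Fin 3 → ℝ} {p : ℝ × (Fin 3 → ℝ)}

noncomputable def materialDeriv (u : ℝ × (Fin 3 → ℝ) → Fin 3 → ℝ) (f : ℝ × (Fin 3 → ℝ) → ℝ)
    (p : ℝ × (Fin 3 → ℝ)) : ℝ :=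
  dt f p + ∑ l, u p l * dx l f p

noncomputable def velocityGrad (u : ℝ × (Fin 3 → ℝ) → Fin 3 → ℝ) (p : ℝ × (Fin 3 → ℝ)) :
    Matrix (Fin 3) (Fin 3) ℝ :=
  Matrix.of fun i k => dx k (fun q => u q i) p

theorem velocityGrad_apply (i k : Fin 3) : velocityGrad u p i k = dx k (fun q => u q i) p := rfl

theorem trace_velocityGrad : (velocityGrad u p).trace = divU u p := rfl

theorem materialDeriv_eq_fderiv : materialDeriv u f p = fderiv ℝ f p (1, u p) := by
  have hdir : ((1 : ℝ), u p) = (1, 0) + ∑ l, u p l • ((0 : ℝ), Pi.single l (1 : ℝ)) := by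
    ext l
    · simp [Prod.fst_sum]
    · simp [Prod.snd_sum, Finset.sum_apply, Pi.single_apply]
  rw [hdir, map_add, map_sum]
  simp only [map_smul, smul_eq_mul]
  rfl

theorem dx_add (i : Fin 3) (hf : DifferentiableAt ℝ f p) (hg : DifferentiableAt ℝ g p) :
    dx i (fun q => f q + g q) p = dx i f p + dx i g p := by
  simp [dx, fderiv_fun_add hf hg]

theorem dx_neg (i : Fin 3) : dx i (fun q => -f q) p = -dx i f p := by
  simp [dx, fderiv_fun_neg]

theorem dx_mul_const (i : Fin 3) (c : ℝ) (hf : DifferentiableAt ℝ f p) :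
    dx i (fun q => f q * c) p = dx i f p * c := by
  rw [dx, fderiv_mul_const hf, _root_.smul_apply, smul_eq_mul, mul_comm]
  rfl

theorem dx_const_mul (i : Fin 3) (c : ℝ) (hf : DifferentiableAt ℝ f p) :
    dx i (fun q => c * f q) p = c * dx i f p := by
  rw [dx, fderiv_const_mul hf, _root_.smul_apply, smul_eq_mul]
  rfl

theorem dx_mul (i : Fin 3) (hf : DifferentiableAt ℝ f p) (hg : DifferentiableAt ℝ g p) :
    dx i (fun q => f q * g q) p = dx i f p * g p + f p * dx i g p := by
  simp [dx, fderiv_fun_mul hf hg]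
  ring

theorem dx_sum {ι : Type*} (s : Finset ι) (i : Fin 3) {f : ι → ℝ × (Fin 3 → ℝ) → ℝ}
    (hf : ∀ j ∈ s, DifferentiableAt ℝ (f j) p) :
    dx i (fun q => ∑ j ∈ s, f j q) p = ∑ j ∈ s, dx i (f j) p := by
  simp [dx, fderiv_fun_sum hf]

theorem dt_sum {ι : Type*} (s : Finset ι) {f : ι → ℝ × (Fin 3 → ℝ) → ℝ}
    (hf : ∀ j ∈ s, DifferentiableAt ℝ (f j) p) :
    dt (fun q => ∑ j ∈ s, f j q) p = ∑ j ∈ s, dt (f j) p := by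
  simp [dt, fderiv_fun_sum hf]

theorem dx_dx_comm (i j : Fin 3) (hf : ContDiff ℝ 2 f) :
    dx i (fun q => dx j f q) p = dx j (fun q => dx i f q) p :=
  fderiv_fderiv_apply_comm hf

theorem dt_dx_comm (i : Fin 3) (hf : ContDiff ℝ 2 f) :
    dt (fun q => dx i f q) p = dx i (fun q => dt f q) p :=
  fderiv_fderiv_apply_comm hf

theorem ContDiff.dx {n : ℕ} (i : Fin 3) (hf : ContDiff ℝ (n + 1) f) :
    ContDiff ℝ n fun q => dx i f q :=
  hf.fderiv_apply_const

theorem ContDiff.dt {n : ℕ} (hf : ContDiff ℝ (n + 1) f) : ContDiff ℝ n fun q => dt f q :=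
  hf.fderiv_apply_const

theorem sum_dx_dx_eq_dx_divU (i : Fin 3) (hu : ∀ j, ContDiff ℝ 2 fun q => u q j) :
    ∑ j, dx j (fun q => dx i (fun r => u r j) q) p = dx i (fun q => divU u q) p := by
  calc ∑ j, dx j (fun q => dx i (fun r => u r j) q) p
      = ∑ j, dx i (fun q => dx j (fun r => u r j) q) p :=
        Finset.sum_congr rfl fun j _ => dx_dx_comm j i (hu j)
    _ = dx i (fun q => divU u q) p :=
        (dx_sum _ i fun j _ => ((hu j).dx j).differentiable one_ne_zero p).symm

theorem sum_dx_materialDeriv {f : Fin 3 → ℝ × (Fin 3 → ℝ) → ℝ} (hf : ∀ j, ContDiff ℝ 2 (f j))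
    (hu : ∀ l, DifferentiableAt ℝ (fun q => u q l) p) :
    ∑ j, dx j (materialDeriv u (f j)) p
      = dt (fun q => ∑ j, dx j (f j) q) p + ∑ j, dx j (fun q => ∑ l, u q l * dx l (f j) q) p := by
  have hdf : ∀ j l, DifferentiableAt ℝ (fun q => dx l (f j) q) p :=
    fun j l => ((hf j).dx l).differentiable one_ne_zero p
  have hdtf : ∀ j, DifferentiableAt ℝ (fun q => dt (f j) q) p :=
    fun j => (hf j).dt.differentiable one_ne_zero p
  rw [dt_sum _ fun j _ => hdf j j, ← Finset.sum_add_distrib]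
  refine Finset.sum_congr rfl fun j _ => ?_
  rw [dt_dx_comm j (hf j), ← dx_add j (hdtf j) (by fun_prop)]
  rfl

end SpaceTime

section Transport

variable {u : ℝ × (Fin 3 → ℝ) → Fin 3 → ℝ} {F : ℝ × (Fin 3 → ℝ) → Matrix (Fin 3) (Fin 3) ℝ}
  {ρt : ℝ × (Fin 3 → ℝ) → ℝ} {P : ℝ → ℝ} {p : ℝ × (Fin 3 → ℝ)}

theorem contDiff_Mfield_apply {n : WithTop ℕ∞} (hF : ∀ i j, ContDiff ℝ n fun q => F q i j)
    (hdet : ∀ q, (F q).det ≠ 0) (a b : Fin 3) : ContDiff ℝ n fun q => Mfield F q a b := by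
  have hinv : ContDiff ℝ n fun q => ((F q).det)⁻¹ := (contDiff_det hF).inv hdet
  simp only [Mfield, Matrix.smul_apply, Matrix.mul_apply, Matrix.transpose_apply, smul_eq_mul]
  fun_prop

theorem contDiff_Gfield_apply {n : WithTop ℕ∞} (hP : ContDiff ℝ n P) (hρ : ContDiff ℝ n ρt)
    (hF : ∀ i j, ContDiff ℝ n fun q => F q i j) (hdet : ∀ q, (F q).det ≠ 0) (a b : Fin 3) :
    ContDiff ℝ n fun q => Gfield P ρt F q a b := by
  have hM := contDiff_Mfield_apply hF hdet
  simp only [Gfield, Matrix.sub_apply, Matrix.smul_apply, smul_eq_mul]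
  fun_prop

theorem differentiable_gfun_apply
    (hdu : ∀ i j, Differentiable ℝ fun q => dx j (fun r => u r i) q)
    (hM : ∀ a b, Differentiable ℝ fun q => Mfield F q a b) (a b : Fin 3) :
    Differentiable ℝ fun q => gfun u F q a b := by
  simp only [gfun, divU, Matrix.of_apply, Matrix.sub_apply, Matrix.one_apply]
  fun_prop

theorem differentiable_qfun (hP : Differentiable ℝ (deriv P)) (hρ : Differentiable ℝ ρt) :
    Differentiable ℝ fun q => qfun P ρt q := by
  simp only [qfun, sub_add_cancel]
  fun_prop

theorem materialDeriv_Mfield_apply (hF : ∀ i j, DifferentiableAt ℝ (fun q => F q i j) p)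
    (hdet : (F p).det ≠ 0)
    (hFeq : ∀ i j, materialDeriv u (fun q => F q i j) p = (velocityGrad u p * F p) i j)
    (a b : Fin 3) :
    materialDeriv u (fun q => Mfield F q a b) p
      = (velocityGrad u p * Mfield F p + Mfield F p * (velocityGrad u p)ᵀ
          - divU u p • Mfield F p) a b := by
  simp only [materialDeriv_eq_fderiv] at hFeq ⊢
  rw [← trace_velocityGrad]
  exact fderiv_inv_det_smul_mul_transpose_apply hF hFeq hdet a b

theorem materialDeriv_eq_of_continuity (hρ : DifferentiableAt ℝ ρt p)
    (hu : ∀ i, DifferentiableAt ℝ (fun q => u q i) p)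
    (hcont : dt ρt p + ∑ i, dx i (fun q => ρt q * u q i) p = 0) :
    materialDeriv u ρt p = -(ρt p * divU u p) := by
  simp only [dx_mul _ hρ (hu _), Finset.sum_add_distrib] at hcont
  simp only [materialDeriv, divU, Fin.sum_univ_three] at hcont ⊢
  linear_combination hcont

theorem gfun_eq : gfun u F p = -(velocityGrad u p * (Mfield F p - 1))
    - (Mfield F p - 1) * (velocityGrad u p)ᵀ + divU u p • (Mfield F p - 1) := by
  ext i j
  simp [gfun, velocityGrad, Matrix.mul_apply]

theorem materialDeriv_Gfield_apply (hM : ∀ a b, DifferentiableAt ℝ (fun q => Mfield F q a b) p)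
    (hρ : DifferentiableAt ℝ ρt p) (hP : DifferentiableAt ℝ P (ρt p))
    (hMeq : ∀ a b, materialDeriv u (fun q => Mfield F q a b) p
      = (velocityGrad u p * Mfield F p + Mfield F p * (velocityGrad u p)ᵀ
          - divU u p • Mfield F p) a b)
    (hρeq : materialDeriv u ρt p = -(ρt p * divU u p)) (a b : Fin 3) :
    materialDeriv u (fun q => Gfield P ρt F q a b) p
      = (-gfun u F p + velocityGrad u p + (velocityGrad u p)ᵀ
          + (qfun P ρt p * divU u p + (deriv P 1 - 1) * divU u p) • 1) a b := by
  have hchain : materialDeriv u (fun q => Gfield P ρt F q a b) p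
      = (velocityGrad u p * Mfield F p + Mfield F p * (velocityGrad u p)ᵀ - divU u p • Mfield F p
          + (deriv P (ρt p) * ρt p * divU u p) • 1) a b := by
    simp only [Gfield, Matrix.sub_apply, Matrix.smul_apply, smul_eq_mul] at hMeq ⊢
    simp only [materialDeriv_eq_fderiv] at hMeq hρeq ⊢
    simp (disch := fun_prop) only [fderiv_fun_sub, fderiv_fun_mul, fderiv_const_apply,
      _root_.sub_apply, _root_.add_apply, _root_.smul_apply, _root_.zero_apply,
      smul_eq_mul, fderiv_comp_apply_eq_deriv_mul hP hρ, hMeq, hρeq]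
    simp only [Matrix.add_apply, Matrix.sub_apply, Matrix.smul_apply, smul_eq_mul]
    ring
  have hregroup : velocityGrad u p * Mfield F p + Mfield F p * (velocityGrad u p)ᵀ
          - divU u p • Mfield F p + (deriv P (ρt p) * ρt p * divU u p) • 1
      = -gfun u F p + velocityGrad u p + (velocityGrad u p)ᵀ
          + (qfun P ρt p * divU u p + (deriv P 1 - 1) * divU u p) • 1 := by
    rw [gfun_eq, qfun, sub_add_cancel]
    simp only [mul_sub, sub_mul, mul_one, one_mul, smul_sub]
    module
  rw [hchain, hregroup]

end Transport

/-- Evolution of the effective flux `𝒢 = ∇·G`: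
`∂ₜ𝒢 + ∇·((u·∇)G) − ∇(q ∇·u) + ∇·g = Δu + P′(1)∇(∇·u)` componentwise. -/
theorem effective_flux_evolution
    (ρt : ℝ × (Fin 3 → ℝ) → ℝ)
    (u : ℝ × (Fin 3 → ℝ) → Fin 3 → ℝ)
    (F : ℝ × (Fin 3 → ℝ) → Matrix (Fin 3) (Fin 3) ℝ)
    (P : ℝ → ℝ)
    (hρ : ContDiff ℝ 2 ρt)
    (hu : ∀ i, ContDiff ℝ 2 fun p => u p i)
    (hF : ∀ i j, ContDiff ℝ 2 fun p => F p i j)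
    (hP : ContDiff ℝ 2 P)
    (hdet : ∀ p, (F p).det ≠ 0)
    (hcont : ∀ p, dt ρt p + ∑ i, dx i (fun q => ρt q * u q i) p = 0)
    (hFeq : ∀ p i j,
      dt (fun q => F q i j) p + ∑ l, u p l * dx l (fun q => F q i j) p
        = ∑ k, dx k (fun q => u q i) p * F p k j) :
    ∀ p i,
      dt (fun q => ∑ j, dx j (fun r => Gfield P ρt F r i j) q) p
        + ∑ j, dx j (fun q => ∑ l, u q l * dx l (fun r => Gfield P ρt F r i j) q) p
        - dx i (fun q => qfun P ρt q * divU u q) p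
        + ∑ j, dx j (fun q => gfun u F q i j) p
      = (∑ j, dx j (fun q => dx j (fun r => u r i) q) p)
        + deriv P 1 * dx i (fun q => divU u q) p := by
  intro p i
  have hu₁ : ∀ i, Differentiable ℝ fun q => u q i := fun i => (hu i).differentiable two_ne_zero
  have hM : ∀ a b, ContDiff ℝ 2 fun q => Mfield F q a b := contDiff_Mfield_apply hF hdet
  have hMeq q := materialDeriv_Mfield_apply (u := u)
    (fun a b => (hF a b).differentiable two_ne_zero q) (hdet q)
    (fun a b => (hFeq q a b).trans (by simp [velocityGrad, Matrix.mul_apply]))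
  have hρeq q := materialDeriv_eq_of_continuity (hρ.differentiable two_ne_zero q)
    (fun l => hu₁ l q) (hcont q)
  have hDG j : materialDeriv u (fun q => Gfield P ρt F q i j) = fun q =>
      (-gfun u F q + velocityGrad u q + (velocityGrad u q)ᵀ
        + (qfun P ρt q * divU u q + (deriv P 1 - 1) * divU u q) • 1) i j :=
    funext fun q => materialDeriv_Gfield_apply (fun a b => (hM a b).differentiable two_ne_zero q)
      (hρ.differentiable two_ne_zero q) (hP.differentiable two_ne_zero _) (hMeq q) (hρeq q) i j
  have hdu : ∀ i j, Differentiable ℝ fun q => dx j (fun r => u r i) q :=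
    fun i j => ((hu i).dx j).differentiable one_ne_zero
  have hg := differentiable_gfun_apply hdu fun a b => (hM a b).differentiable two_ne_zero
  have hq := differentiable_qfun (hP.deriv'.differentiable one_ne_zero)
    (hρ.differentiable two_ne_zero)
  have hdiv : Differentiable ℝ fun q => divU u q := by unfold divU; fun_prop
  rw [← sum_dx_materialDeriv (fun j => contDiff_Gfield_apply hP hρ hF hdet i j) (fun l => hu₁ l p)]
  simp only [hDG, Matrix.add_apply, Matrix.neg_apply, Matrix.transpose_apply, Matrix.smul_apply,
    Matrix.one_apply, velocityGrad_apply, smul_eq_mul]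
  simp (disch := fun_prop) only [dx_add, dx_neg, dx_mul_const, dx_const_mul]
  simp only [Finset.sum_add_distrib, Finset.sum_neg_distrib, mul_ite, mul_one, mul_zero,
    Finset.sum_ite_eq, Finset.mem_univ, if_true, sum_dx_dx_eq_dx_divU i hu]
  ring
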